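/- arXiv:2511.22797 — 6 statements merged into one kernel-verified Lean document; each statement's English description precedes it below -/
import Mathlib

section
/- Let K be a field, L an algebraic separable field extension of K, and f ∈ K[X] an irreducible separable polynomial of degree m. Then there exists an intermediate field M with K ⊆ M ⊆ L, finite over K with [M : K] ≤ m!, such that every monic irreducible factor of the image of f in L[X] has all of its coefficients in M (i.e., lies in the image of M[X] in L[X]). -/
/-!
Let `N` be the subfield of `L̄` generated over `K` by the roots of `f`. It is a splitting field
of `f`, so `[N : K] = |Gal(f)| ≤ m!`, since `Gal(f)` permutes the `m` distinct roots faithfully.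
A monic factor `g` of `f` over `L` splits over `L̄` with roots among those of `f`, so its
coefficients, being symmetric functions of these roots, lie in `N`. Hence they lie in
`M = N ∩ L`, and `[M : K] ≤ [N : K]`.
-/

open Polynomial IntermediateField Module

theorem Polynomial.finrank_splittingField_le_factorial {K : Type*} [Field K] {f : K[X]}
    (hsep : f.Separable) : finrank K f.SplittingField ≤ f.natDegree.factorial := by
  have : IsGalois K f.SplittingField := IsGalois.of_separable_splitting_field hsep
  have : Fact (f.map (algebraMap K f.SplittingField)).Splits := ⟨SplittingField.splits f⟩
  calc finrank K f.SplittingField = Nat.card f.Gal := (IsGalois.card_aut_eq_finrank _ _).symm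
    _ ≤ Nat.card (Equiv.Perm (f.rootSet f.SplittingField)) :=
      Nat.card_le_card_of_injective _ (Gal.galActionHom_injective f f.SplittingField)
    _ = f.natDegree.factorial := by
      rw [Nat.card_perm, Nat.card_eq_fintype_card,
        card_rootSet_eq_natDegree hsep (SplittingField.splits f)]

theorem Polynomial.IsSplittingField.finrank_le_factorial {K : Type*} (E : Type*) [Field K]
    [Field E] [Algebra K E] {f : K[X]} [IsSplittingField K E f] (hsep : f.Separable) :
    finrank K E ≤ f.natDegree.factorial :=
  (IsSplittingField.algEquiv E f).toLinearEquiv.finrank_eq ▸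
    finrank_splittingField_le_factorial hsep

namespace IntermediateField

variable {K L E : Type*} [Field K] [Field L] [Field E] [Algebra K L] [Algebra K E]
  (φ : L →ₐ[K] E) (N : IntermediateField K E)

theorem map_comap_le : (N.comap φ).map φ ≤ N := (gc_map_comap φ).l_u_le N

instance finiteDimensional_comap [FiniteDimensional K N] : FiniteDimensional K (N.comap φ) := by
  have : FiniteDimensional K ((N.comap φ).map φ) :=
    .of_injective (inclusion (map_comap_le φ N)).toLinearMap
      (inclusion_injective (map_comap_le φ N))
  exact (equivMap (N.comap φ) φ).symm.toLinearEquiv.finiteDimensional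

theorem finrank_comap_le [FiniteDimensional K N] : finrank K (N.comap φ) ≤ finrank K N :=
  (equivMap (N.comap φ) φ).toLinearEquiv.finrank_eq ▸ finrank_le_of_le_right (map_comap_le φ N)

end IntermediateField

theorem Polynomial.Splits.coeff_mem_of_roots_mem {K E : Type*} [Field K] [Field E] [Algebra K E]
    {g : E[X]} (hg : g.Splits) (hmonic : g.Monic) {N : IntermediateField K E}
    (hroots : ∀ a ∈ g.roots, a ∈ N) (i : ℕ) : g.coeff i ∈ N := by
  have := hg.mem_lift_of_roots_mem_range hmonic (algebraMap N E) (by simpa using hroots)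
  obtain ⟨x, hx⟩ := (lifts_iff_coeff_lifts g).mp this i
  exact hx ▸ x.2

theorem Polynomial.mem_rootSet_of_mem_roots_of_dvd_map {K L E : Type*} [Field K] [CommRing L]
    [Field E] [Algebra K L] [Algebra K E] [Algebra L E] [IsScalarTower K L E] {f : K[X]}
    (hf : f ≠ 0) {g : L[X]} (hgf : g ∣ f.map (algebraMap K L)) {a : E}
    (ha : a ∈ (g.map (algebraMap L E)).roots) : a ∈ f.rootSet E := by
  rw [mem_rootSet_of_ne hf, aeval_def, eval₂_eq_eval_map, IsScalarTower.algebraMap_eq K L,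
    ← Polynomial.map_map]
  exact eval_eq_zero_of_dvd_of_eval_eq_zero (map_dvd _ hgf) (isRoot_of_mem_roots ha)

theorem exists_intermediateField_factors_coeff_mem_general
    (K L : Type) [Field K] [Field L] [Algebra K L]
    (f : Polynomial K) (hfsep : f.Separable)
    (m : ℕ) (hm : f.natDegree = m) :
    ∃ M : IntermediateField K L, FiniteDimensional K M ∧
      Module.finrank K M ≤ Nat.factorial m ∧
      ∀ g : Polynomial L, g.Monic → Irreducible g →
        g ∣ f.map (algebraMap K L) → ∀ i : ℕ, g.coeff i ∈ M := by
  let N := adjoin K (f.rootSet (AlgebraicClosure L))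
  have : f.IsSplittingField K N := adjoin_rootSet_isSplittingField (IsAlgClosed.splits _)
  have : FiniteDimensional K N := IsSplittingField.finiteDimensional N f
  refine ⟨N.comap (IsScalarTower.toAlgHom K L (AlgebraicClosure L)), inferInstance,
    hm ▸ (finrank_comap_le _ N).trans (IsSplittingField.finrank_le_factorial N hfsep), ?_⟩
  intro g hg _ hgf i
  have hroots : ∀ a ∈ (g.map (algebraMap L (AlgebraicClosure L))).roots, a ∈ N := fun a ha ↦
    subset_adjoin _ _ (mem_rootSet_of_mem_roots_of_dvd_map hfsep.ne_zero hgf ha)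
  show algebraMap L _ (g.coeff i) ∈ N
  simpa using (IsAlgClosed.splits _).coeff_mem_of_roots_mem (hg.map _) hroots i

/-- Let `L/K` be an algebraic separable extension of fields and `f ∈ K[X]` an irreducible
separable polynomial of degree `m`. Then there is an intermediate field `M` with
`[M : K] ≤ m!` such that every monic irreducible factor of the image of `f` in `L[X]`
has all of its coefficients in `M`. -/
theorem exists_intermediateField_factors_coeff_mem
    (K L : Type) [Field K] [Field L] [Algebra K L]
    [Algebra.IsAlgebraic K L] [Algebra.IsSeparable K L]
    (f : Polynomial K) (hf : Irreducible f) (hfsep : f.Separable)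
    (m : ℕ) (hm : f.natDegree = m) :
    ∃ M : IntermediateField K L, FiniteDimensional K M ∧
      Module.finrank K M ≤ Nat.factorial m ∧
      ∀ g : Polynomial L, g.Monic → Irreducible g →
        g ∣ f.map (algebraMap K L) → ∀ i : ℕ, g.coeff i ∈ M :=
  exists_intermediateField_factors_coeff_mem_general K L f hfsep m hm
end

section
/- Let p be a prime, n ≥ 1 and m ≥ 0 integers, ι a finite index type, and for each i ∈ ι let A_i be a finite abelian p-group. Let A = ∏_{i} A_i, let D be a subgroup of A of index at most p^m, and for each i let D_i = D ∩ A_i, where A_i is viewed as a subgroup of A via the embedding that is the identity in the i-th coordinate and 0 elsewhere. Suppose |D_i| ≤ p^n for all i. Then there is a subgroup E of A with E ≤ D, with relative index [D : E] ≤ p^{⌊(n+m)(1+log(n+m))⌋} (log the natural logarithm, ⌊·⌋ the floor), such that E ∩ A_i = 0 for all i ∈ ι. -/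
/-!
Put `k = n + m`. Each `A i` has order `|D ⊓ A i| · [A i : D ⊓ A i] ≤ p ^ n · p ^ m`, so it is a
product of cyclic groups of orders `p ^ e t` with `∑ e t ≤ k`; listing the exponents in decreasing
order, the `(j + 1)`-st is at most `k / (j + 1)`. Hence every `A i` embeds into the single group
`F = ∏ j < k, ZMod (p ^ (k / (j + 1)))`, of order `p ^ ∑ k / (j + 1) ≤ p ^ (k · harmonic k)`.
Multiplying these embeddings gives `f : A →* F` that is injective on every `A i`, and
`E = D ⊓ ker f` has `[D : E] ≤ |F|`.
-/

open Finset Function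

namespace Subgroup

theorem card_le_card_inf_mul_index {G : Type*} [Group G] (H K : Subgroup G) [H.FiniteIndex] :
    Nat.card K ≤ Nat.card ↥(H ⊓ K) * H.index := by
  rw [← relIndex_bot_left K, ← relIndex_bot_left (H ⊓ K),
    ← relIndex_mul_relIndex ⊥ (H ⊓ K) K bot_le inf_le_right, inf_relIndex_right]
  gcongr
  rw [← relIndex_top_right]
  exact relIndex_le_of_le_right le_top (by rw [relIndex_top_right]; exact FiniteIndex.index_ne_zero)

theorem relIndex_inf_ker_le_card {G F : Type*} [Group G] [Group F] [Finite F] (D : Subgroup G)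
    (f : G →* F) : (D ⊓ f.ker).relIndex D ≤ Nat.card F := by
  rw [inf_comm, inf_relIndex_right, relIndex_ker]
  exact card_le_card_group _

end Subgroup

theorem MonoidHom.ker_inf_range_eq_bot_of_injective_comp {G H F : Type*} [Group G] [Group H]
    [Group F] (f : G →* F) (g : H →* G) (h : Injective (f.comp g)) : f.ker ⊓ g.range = ⊥ := by
  rw [eq_bot_iff]
  rintro _ ⟨hx, a, rfl⟩
  rw [Subgroup.mem_bot, h (by simpa using hx : f.comp g a = f.comp g 1), map_one]

theorem Fin.succ_mul_le_sum_of_antitone {c : ℕ} {a : Fin c → ℕ} (ha : Antitone a) (j : Fin c) :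
    (j + 1) * a j ≤ ∑ i, a i :=
  calc (j + 1) * a j = #(Iic j) • a j := by simp [Fin.card_Iic]
    _ ≤ ∑ i ∈ Iic j, a i := card_nsmul_le_sum _ _ _ fun i hi => ha (mem_Iic.1 hi)
    _ ≤ ∑ i, a i := sum_le_sum_of_subset (subset_univ _)

theorem exists_injective_fin_succ_mul_le {ι : Type*} [Fintype ι] {e : ι → ℕ} (he : ∀ t, 1 ≤ e t)
    {k : ℕ} (hk : ∑ t, e t ≤ k) :
    ∃ σ : ι → Fin k, Injective σ ∧ ∀ t, (σ t + 1) * e t ≤ k := by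
  let e' := OrderDual.toDual ∘ e ∘ (Fintype.equivFin ι).symm
  let π : Fin (Fintype.card ι) ≃ ι := (Tuple.sort e').trans (Fintype.equivFin ι).symm
  have hπ : Antitone (e ∘ π) := monotone_toDual_comp_iff.1 (Tuple.monotone_sort e')
  have hcard : Fintype.card ι ≤ k :=
    calc Fintype.card ι = ∑ _t : ι, 1 := by simp
      _ ≤ ∑ t, e t := sum_le_sum fun t _ => he t
      _ ≤ k := hk
  refine ⟨fun t => Fin.castLE hcard (π.symm t), (Fin.castLE_injective hcard).comp π.symm.injective,
    fun t => ?_⟩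
  calc ((π.symm t : ℕ) + 1) * e t = ((π.symm t : ℕ) + 1) * (e ∘ π) (π.symm t) := by simp
    _ ≤ ∑ j, e (π j) := Fin.succ_mul_le_sum_of_antitone hπ _
    _ = ∑ t, e t := Equiv.sum_comp π e
    _ ≤ k := hk

theorem ZMod.exists_injective_addMonoidHom_of_dvd {a b : ℕ} (hab : a ∣ b) (hb : b ≠ 0) :
    ∃ f : ZMod a →+ ZMod b, Injective f := by
  obtain ⟨c, rfl⟩ := hab
  have hc : (c : ℤ) ≠ 0 := by exact_mod_cast right_ne_zero_of_mul hb
  refine ⟨ZMod.lift a ⟨c • Int.castAddHom (ZMod (a * c)), ?_⟩,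
    (ZMod.lift_injective a).2 fun m hm => ?_⟩
  · simp only [AddMonoidHom.smul_apply, Int.coe_castAddHom, Int.cast_natCast, nsmul_eq_mul]
    rw [← Nat.cast_mul, mul_comm, ZMod.natCast_self]
  · have hcm : ((c * m : ℤ) : ZMod (a * c)) = 0 := by simpa using hm
    rw [ZMod.intCast_zmod_eq_zero_iff_dvd] at hcm ⊢
    push_cast at hcm
    rwa [mul_comm (a : ℤ), mul_dvd_mul_iff_left hc] at hcm

theorem Pi.exists_injective_monoidHom_of_injective {ι κ : Type*} [Fintype ι] [DecidableEq κ]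
    {M : ι → Type*} {N : κ → Type*} [∀ t, Group (M t)] [∀ j, CommGroup (N j)] {σ : ι → κ}
    (hσ : Injective σ) (φ : ∀ t, M t →* N (σ t)) (hφ : ∀ t, Injective (φ t)) :
    ∃ Φ : (∀ t, M t) →* ∀ j, N j, Injective Φ := by
  classical
  let ψ t := (MonoidHom.mulSingle N (σ t)).comp (φ t)
  have hcomm : Pairwise fun s t => ∀ x y, Commute (ψ s x) (ψ t y) :=
    fun _ _ _ _ _ => Commute.all _ _
  let Φ := MonoidHom.noncommPiCoprod ψ hcomm
  have hΦ : ∀ t, (Pi.evalMonoidHom N (σ t)).comp Φ = (φ t).comp (Pi.evalMonoidHom M t) := by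
    refine fun t => MonoidHom.pi_ext fun s y => ?_
    simp only [Φ, MonoidHom.comp_apply, MonoidHom.noncommPiCoprod_mulSingle, ψ]
    obtain rfl | hst := eq_or_ne s t
    · simp
    · simp [hst, hσ.ne hst]
  refine ⟨Φ, (injective_iff_map_eq_one Φ).2 fun x hx => funext fun t => hφ t ?_⟩
  simpa [hx] using (DFunLike.congr_fun (hΦ t) x).symm

abbrev UniversalPGroup (p k : ℕ) : Type :=
  ∀ j : Fin k, Multiplicative (ZMod (p ^ (k / (j + 1))))

theorem card_universalPGroup (p k : ℕ) :
    Nat.card (UniversalPGroup p k) = p ^ ∑ j ∈ range k, k / (j + 1) := by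
  rw [Nat.card_pi, ← prod_pow_eq_pow_sum, ← Fin.prod_univ_eq_prod_range]
  exact prod_congr rfl fun j _ => (Nat.card_congr Multiplicative.toAdd).trans (Nat.card_zmod _)

theorem exists_injective_monoidHom_universalPGroup {p : ℕ} (hp : p.Prime) {k : ℕ} {G : Type*}
    [CommGroup G] [Finite G] (hG : Nat.card G ∣ p ^ k) :
    ∃ g : G →* UniversalPGroup p k, Injective g := by
  obtain ⟨ι, _, n, hn, ⟨eqv⟩⟩ := CommGroup.equiv_prod_multiplicative_zmod_of_finite G
  have hprod : ∏ t, n t ∣ p ^ k := by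
    simpa [Nat.card_congr eqv.toEquiv, Nat.card_pi, Nat.card_congr Multiplicative.toAdd] using hG
  choose e he using fun t =>
    (Nat.dvd_prime_pow hp).1 ((dvd_prod_of_mem n (mem_univ t)).trans hprod)
  have he_pos : ∀ t, 1 ≤ e t := fun t => Nat.one_le_iff_ne_zero.2 fun h => by
    simpa [(he t).2, h] using hn t
  have hsum : ∑ t, e t ≤ k := by
    rw [← Nat.pow_dvd_pow_iff_le_right hp.one_lt, ← prod_pow_eq_pow_sum]
    simpa [(he _).2] using hprod
  obtain ⟨σ, hσ, hσe⟩ := exists_injective_fin_succ_mul_le he_pos hsum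
  have hcyc : ∀ t, ∃ φ : Multiplicative (ZMod (n t)) →* Multiplicative (ZMod (p ^ (k / (σ t + 1)))),
      Injective φ := by
    intro t
    have hdvd : n t ∣ p ^ (k / (σ t + 1)) := by
      rw [(he t).2]
      exact pow_dvd_pow p ((Nat.le_div_iff_mul_le (Nat.succ_pos _)).2 (by linarith [hσe t]))
    obtain ⟨φ, hφ⟩ := ZMod.exists_injective_addMonoidHom_of_dvd hdvd (pow_ne_zero _ hp.ne_zero)
    exact ⟨φ.toMultiplicative, hφ⟩
  choose φ hφ using hcyc
  obtain ⟨Φ, hΦ⟩ := Pi.exists_injective_monoidHom_of_injective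
    (N := fun j : Fin k => Multiplicative (ZMod (p ^ (k / (j + 1))))) hσ φ hφ
  exact ⟨Φ.comp eqv.toMonoidHom, hΦ.comp eqv.injective⟩

theorem sum_range_div_succ_le_floor (k : ℕ) :
    ∑ j ∈ range k, k / (j + 1) ≤ ⌊(k : ℝ) * (1 + Real.log k)⌋₊ := by
  refine Nat.le_floor ?_
  calc ((∑ j ∈ range k, k / (j + 1) : ℕ) : ℝ)
      ≤ ∑ j ∈ range k, (k : ℝ) * (j + 1 : ℝ)⁻¹ := by
        push_cast
        exact sum_le_sum fun j _ => by
          simpa [div_eq_mul_inv] using Nat.cast_div_le (m := k) (n := j + 1)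
    _ = k * harmonic k := by simp [harmonic, mul_sum]
    _ ≤ k * (1 + Real.log k) := by gcongr; exact harmonic_le_one_add_log k

theorem exists_subgroup_relindex_le_inf_single_eq_bot_general
    (p : ℕ) (hp : p.Prime) (n m : ℕ)
    (ι : Type) [Fintype ι] [DecidableEq ι]
    (A : ι → Type) [∀ i, CommGroup (A i)] [∀ i, Finite (A i)]
    (hA : ∀ i, ∃ k : ℕ, Nat.card (A i) = p ^ k)
    (D : Subgroup (∀ i, A i)) (hD : D.index ≤ p ^ m)
    (hDi : ∀ i, Nat.card ↥(D ⊓ (MonoidHom.mulSingle A i).range) ≤ p ^ n) :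
    ∃ E : Subgroup (∀ i, A i), E ≤ D ∧
      E.relIndex D ≤ p ^ ⌊((n + m : ℕ) : ℝ) * (1 + Real.log ((n + m : ℕ) : ℝ))⌋₊ ∧
      ∀ i, E ⊓ (MonoidHom.mulSingle A i).range = ⊥ := by
  have hcard : ∀ i, Nat.card (A i) ∣ p ^ (n + m) := fun i => by
    obtain ⟨ki, hki⟩ := hA i
    rw [hki, Nat.pow_dvd_pow_iff_le_right hp.one_lt, ← Nat.pow_le_pow_iff_right hp.one_lt, ← hki]
    calc Nat.card (A i) = Nat.card (MonoidHom.mulSingle A i).range :=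
          Nat.card_congr (MonoidHom.ofInjective (Pi.mulSingle_injective i)).toEquiv
      _ ≤ Nat.card ↥(D ⊓ (MonoidHom.mulSingle A i).range) * D.index :=
          D.card_le_card_inf_mul_index _
      _ ≤ p ^ (n + m) := pow_add p n m ▸ Nat.mul_le_mul (hDi i) hD
  have : NeZero p := ⟨hp.ne_zero⟩
  choose g hg using fun i => exists_injective_monoidHom_universalPGroup hp (hcard i)
  have hcomm : Pairwise fun i j => ∀ x y, Commute (g i x) (g j y) :=
    fun _ _ _ _ _ => Commute.all _ _
  let f := MonoidHom.noncommPiCoprod g hcomm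
  refine ⟨D ⊓ f.ker, inf_le_left, ?_, fun i => ?_⟩
  · calc (D ⊓ f.ker).relIndex D ≤ Nat.card (UniversalPGroup p (n + m)) :=
          D.relIndex_inf_ker_le_card f
      _ = _ := card_universalPGroup p (n + m)
      _ ≤ _ := Nat.pow_le_pow_right hp.pos (sum_range_div_succ_le_floor _)
  · have hfi : f.comp (MonoidHom.mulSingle A i) = g i :=
      MonoidHom.ext fun a => MonoidHom.noncommPiCoprod_mulSingle (hcomm := hcomm) g i a
    exact eq_bot_iff.2 ((inf_le_inf_right _ inf_le_right).trans
      (f.ker_inf_range_eq_bot_of_injective_comp _ (hfi ▸ hg i)).le)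

/-- Let `p` be a prime, `n ≥ 1`, `m ≥ 0`, `ι` a finite index type, and `A i` finite abelian
`p`-groups. Let `D` be a subgroup of `A = ∏ i, A i` of index at most `p ^ m`, and let
`D i = D ⊓ A i` (with `A i` embedded via `MonoidHom.mulSingle`). If `|D i| ≤ p ^ n` for all `i`,
then there is a subgroup `E ≤ D` with `[D : E] ≤ p ^ ⌊(n + m) * (1 + log (n + m))⌋` such that
`E ⊓ A i = ⊥` for all `i`. -/
theorem exists_subgroup_relindex_le_inf_single_eq_bot
    (p : ℕ) (hp : p.Prime) (n m : ℕ) (hn : 1 ≤ n)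
    (ι : Type) [Fintype ι] [DecidableEq ι]
    (A : ι → Type) [∀ i, CommGroup (A i)] [∀ i, Finite (A i)]
    (hA : ∀ i, ∃ k : ℕ, Nat.card (A i) = p ^ k)
    (D : Subgroup (∀ i, A i)) (hD : D.index ≤ p ^ m)
    (hDi : ∀ i, Nat.card ↥(D ⊓ (MonoidHom.mulSingle A i).range) ≤ p ^ n) :
    ∃ E : Subgroup (∀ i, A i), E ≤ D ∧
      E.relIndex D ≤ p ^ ⌊((n + m : ℕ) : ℝ) * (1 + Real.log ((n + m : ℕ) : ℝ))⌋₊ ∧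
      ∀ i, E ⊓ (MonoidHom.mulSingle A i).range = ⊥ :=
  exists_subgroup_relindex_le_inf_single_eq_bot_general p hp n m ι A hA D hD hDi
end

section
/- Let p be a prime, ι a finite index type, for each i ∈ ι let A_i be a finite abelian p-group, and let A = ∏_i A_i. Let H be a finite abelian group such that for each i ∈ ι there exists an injective group homomorphism A_i ↪ H. Then there exists a subgroup E of A such that the quotient A/E admits an injective group homomorphism into H and such that E ∩ A_i = 0 for every i ∈ ι, where A_i is viewed as a subgroup of A via the embedding that is the identity in the i-th coordinate and 0 elsewhere. -/
/-- Let `p` be a prime, `ι` a finite index type, `A i` finite abelian `p`-groups and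
`A = ∏ i, A i`. If `H` is a finite abelian group such that each `A i` embeds into `H`, then
there is a subgroup `E` of `A` such that `A ⧸ E` embeds into `H` and `E ⊓ A i = ⊥` for all
`i`, where `A i` is embedded into the product via `MonoidHom.mulSingle`. -/
theorem exists_subgroup_quotient_embeds_inf_single_eq_bot
    (p : ℕ) (hp : p.Prime)
    (ι : Type) [Fintype ι] [DecidableEq ι]
    (A : ι → Type) [∀ i, CommGroup (A i)] [∀ i, Finite (A i)]
    (hA : ∀ i, ∃ k : ℕ, Nat.card (A i) = p ^ k)
    (H : Type) [CommGroup H] [Finite H]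
    (φ : ∀ i, A i →* H) (hφ : ∀ i, Function.Injective (φ i)) :
    ∃ E : Subgroup (∀ i, A i),
      (∃ ψ : (∀ i, A i) ⧸ E →* H, Function.Injective ψ) ∧
      ∀ i, E ⊓ (MonoidHom.mulSingle A i).range = ⊥ := by
  set f : (∀ i, A i) →* H :=
    { toFun := fun a => ∏ i, φ i (a i)
      map_one' := by simp
      map_mul' := by
        intro a b
        simp [Finset.prod_mul_distrib] } with hf
  have hfval : ∀ i (a : A i), f (Pi.mulSingle i a) = φ i a := by
    intro i a
    have : ∀ j ∈ Finset.univ, j ≠ i → φ j (Pi.mulSingle i a j) = 1 := by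
      intro j _ hj
      simp [Pi.mulSingle_eq_of_ne hj]
    simp only [hf, MonoidHom.coe_mk, OneHom.coe_mk]
    rw [Finset.prod_eq_single i (fun j _ hj => by simp [Pi.mulSingle_eq_of_ne hj])
      (by simp)]
    simp
  refine ⟨f.ker, ⟨QuotientGroup.kerLift f, QuotientGroup.kerLift_injective f⟩, ?_⟩
  intro i
  rw [eq_bot_iff]
  rintro x ⟨hxk, ⟨a, rfl⟩⟩
  have : f (Pi.mulSingle i a) = 1 := hxk
  rw [hfval] at this
  have : a = 1 := hφ i (by simpa using this)
  simp [Subgroup.mem_bot, this, MonoidHom.mulSingle_apply]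
end

section
/- Let K be a global function field of characteristic p and R a coordinate ring of K whose ideal class group ClassGroup R is trivial. Then for α ∈ Kˣ, the v-adic additive valuation of α is divisible by p for every height-one prime v ∈ HeightOneSpectrum R if and only if α = u·β^p for some unit u ∈ Rˣ and some β ∈ Kˣ. -/
/-!
The `v`-adic valuation of `α ≠ 0` is `exp (-count_v (α))`, where `count_v` is the exponent of `v` in
the factorisation of the fractional ideal `(α)`. So the valuations of `α` are all `p`-th powers
exactly when `p` divides every exponent of `(α)`, i.e. when `(α) = J ^ p` for a fractional ideal `J`.
As the class group is trivial, `J = (β)`, and `(α) = (β ^ p)` means `α = u β ^ p` with `u ∈ Rˣ`.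
-/

open IsDedekindDomain IsDedekindDomain.HeightOneSpectrum FractionalIdeal
open scoped nonZeroDivisors WithZero

theorem WithZero.exists_exp_eq_pow_iff {M : Type*} [AddMonoid M] (a : M) (n : ℕ) :
    (∃ γ : Mᵐ⁰, exp a = γ ^ n) ↔ ∃ b : M, a = n • b := by
  constructor
  · rintro ⟨γ, h⟩
    induction γ using WithZero.expRecOn with
    | zero =>
      rcases eq_or_ne n 0 with rfl | hn
      · exact ⟨0, by simpa using h⟩
      · simp [zero_pow hn] at h
    | exp b => exact ⟨b, exp_injective (by rw [h, exp_nsmul])⟩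
  · rintro ⟨b, rfl⟩
    exact ⟨exp b, exp_nsmul n b⟩

section

variable {R K : Type*} [CommRing R] [IsDedekindDomain R] [Field K] [Algebra R K]
  [IsFractionRing R K]

theorem IsDedekindDomain.HeightOneSpectrum.valuation_algebraMap_unit
    (v : HeightOneSpectrum R) (u : Rˣ) : v.valuation K (algebraMap R K u) = 1 := by
  rw [valuation_of_algebraMap, intValuation_eq_one_iff]
  exact fun hu ↦ v.isPrime.ne_top (Ideal.eq_top_of_isUnit_mem _ hu u.isUnit)

theorem IsDedekindDomain.HeightOneSpectrum.valuation_eq_exp_neg_count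
    (v : HeightOneSpectrum R) {x : K} (hx : x ≠ 0) :
    v.valuation K x = WithZero.exp (-count K v (spanSingleton R⁰ x)) := by
  obtain ⟨⟨n, d⟩, rfl⟩ := IsLocalization.mk'_surjective R⁰ x
  have hn : n ≠ 0 := by
    rintro rfl
    simp at hx
  have hrep : spanSingleton R⁰ (IsLocalization.mk' K n d) =
      spanSingleton R⁰ (algebraMap R K d)⁻¹ * ↑(Ideal.span {n} : Ideal R) := by
    rw [coeIdeal_span_singleton, spanSingleton_mul_spanSingleton,
      IsFractionRing.mk'_eq_div, div_eq_mul_inv, mul_comm]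
  rw [count_well_defined K v (spanSingleton_ne_zero_iff.mpr hx) hrep, valuation_of_mk',
    v.intValuation_if_neg hn, v.intValuation_if_neg (nonZeroDivisors.coe_ne_zero d),
    ← WithZero.exp_sub]
  congr 1
  ring

theorem IsDedekindDomain.HeightOneSpectrum.exists_valuation_eq_pow_iff
    (v : HeightOneSpectrum R) {x : K} (hx : x ≠ 0) (n : ℕ) :
    (∃ γ : ℤᵐ⁰, v.valuation K x = γ ^ n) ↔ (n : ℤ) ∣ count K v (spanSingleton R⁰ x) := by
  rw [v.valuation_eq_exp_neg_count hx, WithZero.exists_exp_eq_pow_iff, ← dvd_neg]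
  simp only [nsmul_eq_mul, Dvd.dvd, eq_comm]

theorem FractionalIdeal.eq_of_count_eq {I J : FractionalIdeal R⁰ K} (hI : I ≠ 0) (hJ : J ≠ 0)
    (h : ∀ v : HeightOneSpectrum R, count K v I = count K v J) : I = J := by
  rw [← finprod_heightOneSpectrum_factorization' K hI,
    ← finprod_heightOneSpectrum_factorization' K hJ]
  simp only [h]

theorem FractionalIdeal.exists_eq_pow_of_dvd_count {I : FractionalIdeal R⁰ K} (hI : I ≠ 0)
    {n : ℕ} (h : ∀ v : HeightOneSpectrum R, (n : ℤ) ∣ count K v I) :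
    ∃ J : FractionalIdeal R⁰ K, J ≠ 0 ∧ I = J ^ n := by
  let e : HeightOneSpectrum R → ℤ := fun v ↦ count K v I / n
  have he_fin : ∀ᶠ v in Filter.cofinite, e v = 0 := by
    filter_upwards [finite_factors I] with v hv
    simp [e, hv]
  let J := ∏ᶠ v : HeightOneSpectrum R, (v.asIdeal : FractionalIdeal R⁰ K) ^ e v
  have hJ : J ≠ 0 := finprod_ne_zero fun v ↦ zpow_ne_zero _ (coeIdeal_ne_zero.mpr v.ne_bot)
  refine ⟨J, hJ, eq_of_count_eq hI (pow_ne_zero n hJ) fun v ↦ ?_⟩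
  rw [count_pow, count_finprod K v e he_fin, Int.mul_ediv_cancel' (h v)]

theorem FractionalIdeal.exists_eq_spanSingleton_of_subsingleton_classGroup
    [Subsingleton (ClassGroup R)] (I : FractionalIdeal R⁰ K) :
    ∃ b : K, I = spanSingleton R⁰ b := by
  rcases eq_or_ne I 0 with rfl | hI
  · exact ⟨0, spanSingleton_zero.symm⟩
  · exact (isPrincipal_iff I).mp (ClassGroup.isPrincipal_coeSubmodule_of_isUnit I hI.isUnit)

theorem exists_eq_unit_mul_pow_of_dvd_count [Subsingleton (ClassGroup R)] {x : K} (hx : x ≠ 0)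
    {n : ℕ} (h : ∀ v : HeightOneSpectrum R, (n : ℤ) ∣ count K v (spanSingleton R⁰ x)) :
    ∃ (u : Rˣ) (b : K), b ≠ 0 ∧ x = algebraMap R K u * b ^ n := by
  obtain ⟨J, hJ, hxJ⟩ := exists_eq_pow_of_dvd_count (spanSingleton_ne_zero_iff.mpr hx) h
  obtain ⟨b, rfl⟩ := J.exists_eq_spanSingleton_of_subsingleton_classGroup
  obtain ⟨u, hu⟩ := spanSingleton_eq_spanSingleton.mp (hxJ.trans (spanSingleton_pow b n)).symm
  refine ⟨u, b, spanSingleton_ne_zero_iff.mp hJ, ?_⟩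
  rw [← hu, Units.smul_def, Algebra.smul_def]

end

theorem pDivisible_valuations_iff_unit_mul_pow_general
    (p : ℕ)
    (K : Type) [Field K]
    (R : Type) [CommRing R] [IsDedekindDomain R] [Algebra R K] [IsFractionRing R K]
    (hcl : Subsingleton (ClassGroup R))
    (α : Kˣ) :
    (∀ v : HeightOneSpectrum R,
      ∃ γ : WithZero (Multiplicative ℤ), v.valuation K ((α : K)) = γ ^ p) ↔
    ∃ (u : Rˣ) (β : Kˣ), (α : K) = algebraMap R K u * (β : K) ^ p := by
  constructor
  · intro hval
    obtain ⟨u, b, hb, hα⟩ := exists_eq_unit_mul_pow_of_dvd_count α.ne_zero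
      fun v ↦ (v.exists_valuation_eq_pow_iff α.ne_zero p).mp (hval v)
    exact ⟨u, Units.mk0 b hb, hα⟩
  · rintro ⟨u, β, hα⟩ v
    exact ⟨v.valuation K β, by rw [hα, map_mul, map_pow, valuation_algebraMap_unit, one_mul]⟩

/-- Let `K` be a global function field of characteristic `p` and `R` a coordinate ring of `K`
with trivial ideal class group. Then for `α ∈ Kˣ`, the `v`-adic valuation of `α` is divisible
by `p` (i.e. is a `p`-th power in `WithZero (Multiplicative ℤ)`) for every height-one prime `v`
of `R` if and only if `α = u * β ^ p` for some unit `u ∈ Rˣ` and some `β ∈ Kˣ`. -/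
theorem pDivisible_valuations_iff_unit_mul_pow
    (p : ℕ) (hp : p.Prime)
    (Fq K : Type) [Field Fq] [Fintype Fq] [Field K]
    [Algebra (RatFunc Fq) K] [FunctionField Fq K] [CharP K p]
    (R : Type) [CommRing R] [IsDedekindDomain R] [Algebra R K] [IsFractionRing R K]
    [Algebra Fq R] [Algebra Fq K] [IsScalarTower Fq R K] [Algebra.FiniteType Fq R]
    (hcl : Subsingleton (ClassGroup R))
    (α : Kˣ) :
    (∀ v : HeightOneSpectrum R,
      ∃ γ : WithZero (Multiplicative ℤ), v.valuation K ((α : K)) = γ ^ p) ↔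
    ∃ (u : Rˣ) (β : Kˣ), (α : K) = algebraMap R K u * (β : K) ^ p :=
  pDivisible_valuations_iff_unit_mul_pow_general p K R hcl α
end

section
/- Let K be a global function field of characteristic p, R a coordinate ring of K, v a height-one prime of R, and K_v the v-adic completion of K. If b ∈ K and the image of b in K_v is a p-th power in K_v, then b is a p-th power in K. -/
/-!
The `p`-th powers of `K` form a subfield `Kᵖ` with `[K : Kᵖ] = p`. Indeed, Frobenius identifies
`Lᵖ/Fᵖ` with `L/F` for any finite extension `L/F`, so `[L : Lᵖ] = [F : Fᵖ]`; and `𝔽_q(t)` is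
generated over its `p`-th powers by `t`, whose minimal polynomial is `X ^ p - t ^ p`. The elements
of `K` that are `p`-th powers in `K_v` form a subfield between `Kᵖ` and `K`, hence equal to one of
them; it is not `K`, since a uniformizer has valuation `-1` and so is not a `p`-th power in `K_v`.
-/

open IsDedekindDomain
open scoped WithZero

theorem finrank_frobenius_fieldRange_eq (p : ℕ) (F L : Type*) [Field F] [Field L] [Algebra F L]
    [FiniteDimensional F L] [ExpChar F p] [ExpChar L p] :
    Module.finrank (frobenius L p).fieldRange L = Module.finrank (frobenius F p).fieldRange F := by
  set Fp := (frobenius F p).fieldRange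
  set Lp := (frobenius L p).fieldRange
  let : Algebra Fp Lp := ((algebraMap Fp L).codRestrict Lp fun x => by
    obtain ⟨y, hy⟩ := x.2
    exact ⟨algebraMap F L y, by rw [← RingHom.map_frobenius, hy]; rfl⟩).toAlgebra
  have : IsScalarTower Fp Lp L := IsScalarTower.of_algebraMap_eq fun _ => rfl
  have hfrob : Module.finrank Fp Lp = Module.finrank F L := by
    refine Algebra.finrank_eq_of_equiv_equiv (frobenius F p).rangeRestrictFieldEquiv.symm
      (frobenius L p).rangeRestrictFieldEquiv.symm ?_
    ext x
    apply frobenius_inj L p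
    simp only [RingEquiv.toRingHom_eq_coe, RingHom.coe_comp, RingHom.coe_coe, Function.comp_apply]
    rw [← RingHom.map_frobenius, RingHom.rangeRestrictFieldEquiv_apply_symm_apply,
      RingHom.rangeRestrictFieldEquiv_apply_symm_apply]
    rfl
  have htower :=
    (Module.finrank_mul_finrank Fp F L).trans (Module.finrank_mul_finrank Fp Lp L).symm
  rw [hfrob, mul_comm] at htower
  exact (Nat.eq_of_mul_eq_mul_left Module.finrank_pos htower).symm

theorem Valuation.pow_ne_of_eq_exp_neg_one {L : Type*} [Ring L] (w : Valuation L ℤᵐ⁰) {x : L}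
    (hx : w x = WithZero.exp (-1)) {n : ℕ} (hn : n ≠ 1) (y : L) : y ^ n ≠ x := fun h => hn <| by
  have : (n : ℤ) * WithZero.log (w y) = -1 := by
    rw [← nsmul_eq_mul, ← WithZero.log_pow, ← map_pow, h, hx, WithZero.log_exp]
  have h1 : (n : ℤ) * -WithZero.log (w y) = 1 := by rw [mul_neg, this, neg_neg]
  exact_mod_cast Int.eq_one_of_mul_eq_one_right (Int.natCast_nonneg n) h1

theorem Subfield.eq_or_eq_top_of_le_of_finrank_prime {K : Type*} [Field K] {E M : Subfield K}
    (hEM : E ≤ M) (hp : (Module.finrank E K).Prime) : M = E ∨ M = ⊤ := by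
  have := IntermediateField.isSimpleOrder_of_finrank_prime E K hp
  rcases eq_bot_or_eq_top (M.toIntermediateField (K := E) fun x => hEM x.2) with h | h
  · left
    exact (congrArg IntermediateField.toSubfield h).trans E.fieldRange_subtype
  · right
    simpa using congrArg IntermediateField.toSubfield h

namespace RatFunc

theorem intDegree_pow {K : Type*} [Field K] (x : RatFunc K) (n : ℕ) :
    (x ^ n).intDegree = n * x.intDegree := by
  rcases eq_or_ne x 0 with rfl | hx
  · cases n <;> simp
  induction n with
  | zero => simp
  | succ n ih => rw [pow_succ, intDegree_mul (pow_ne_zero n hx) hx, ih]; push_cast; ring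

theorem pow_ne_X {K : Type*} [Field K] {n : ℕ} (hn : n ≠ 1) (x : RatFunc K) :
    x ^ n ≠ X := fun h => hn <| by
  have : (n : ℤ) * x.intDegree = 1 := by rw [← intDegree_pow, h, intDegree_X]
  exact_mod_cast Int.eq_one_of_mul_eq_one_right (by positivity) this

theorem finrank_frobenius_fieldRange (p : ℕ) [Fact p.Prime] (K : Type*) [Field K]
    [CharP K p] [PerfectRing K p] :
    Module.finrank (frobenius (RatFunc K) p).fieldRange (RatFunc K) = p := by
  let E : IntermediateField K (RatFunc K) :=
    (frobenius (RatFunc K) p).fieldRange.toIntermediateField fun a =>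
      ⟨algebraMap K _ ((frobeniusEquiv K p).symm a), by
        rw [← RingHom.map_frobenius, frobenius_apply_frobeniusEquiv_symm]⟩
  -- `K(X)ᵖ` contains the constants because `K` is perfect
  change Module.finrank E (RatFunc K) = p
  let Xp : E := ⟨X ^ p, X, rfl⟩
  have hXp : ∀ c : E, c ^ p ≠ Xp := fun c hc => by
    obtain ⟨x, hx⟩ := c.2
    have : (c : RatFunc K) = X := frobenius_inj _ p (congrArg Subtype.val hc)
    exact pow_ne_X (Fact.out : p.Prime).ne_one x (by rw [← this, ← hx]; rfl)
  have hmonic : (Polynomial.X ^ p - Polynomial.C Xp).Monic :=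
    Polynomial.monic_X_pow_sub_C Xp (Fact.out : p.Prime).ne_zero
  have haeval : Polynomial.aeval (X : RatFunc K) (Polynomial.X ^ p - Polynomial.C Xp) = 0 := by
    simp [Xp]
  rw [← IntermediateField.finrank_top', ← IntermediateField.adjoin_X E,
    IntermediateField.adjoin.finrank ⟨_, hmonic, haeval⟩,
    ← minpoly.eq_of_irreducible_of_monic (X_pow_sub_C_irreducible_of_prime Fact.out hXp) haeval
      hmonic, Polynomial.natDegree_X_pow_sub_C]

end RatFunc

theorem pow_p_of_adicCompletion_pow_p_general
    (p : ℕ) (hp : p.Prime)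
    (Fq K : Type) [Field Fq] [Fintype Fq] [Field K]
    [Algebra (RatFunc Fq) K] [FunctionField Fq K] [CharP K p]
    (R : Type) [CommRing R] [IsDedekindDomain R] [Algebra R K] [IsFractionRing R K]
    (v : HeightOneSpectrum R)
    (b : K) (h : ∃ y : v.adicCompletion K, algebraMap K (v.adicCompletion K) b = y ^ p) :
    ∃ c : K, b = c ^ p := by
  have : Fact p.Prime := ⟨hp⟩
  have : CharP (RatFunc Fq) p := (Algebra.charP_iff (RatFunc Fq) K p).mpr inferInstance
  have : CharP Fq p := (Algebra.charP_iff Fq (RatFunc Fq) p).mpr inferInstance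
  have : CharP (v.adicCompletion K) p :=
    (Algebra.charP_iff K (v.adicCompletion K) p).mp inferInstance
  obtain ⟨y, hy⟩ := h
  obtain ⟨π, hπ⟩ := v.valuation_exists_uniformizer K
  set M := (frobenius (v.adicCompletion K) p).fieldRange.comap
    (algebraMap K (v.adicCompletion K))
  have hKpM : (frobenius K p).fieldRange ≤ M := by
    rintro _ ⟨z, rfl⟩
    exact ⟨algebraMap K _ z, (RingHom.map_frobenius _ p z).symm⟩
  have hdeg : Module.finrank (frobenius K p).fieldRange K = p :=
    (finrank_frobenius_fieldRange_eq p (RatFunc Fq) K).trans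
      (RatFunc.finrank_frobenius_fieldRange p Fq)
  rcases Subfield.eq_or_eq_top_of_le_of_finrank_prime hKpM (by rwa [hdeg]) with hM | hM
  · obtain ⟨c, hc⟩ : b ∈ (frobenius K p).fieldRange := hM ▸ ⟨y, hy.symm⟩
    exact ⟨c, hc.symm⟩
  · obtain ⟨σ, hσ⟩ : π ∈ M := hM ▸ Subfield.mem_top π
    exact absurd hσ <| Valued.v.pow_ne_of_eq_exp_neg_one
      ((v.valuedAdicCompletion_eq_valuation' π).trans hπ) hp.ne_one σ

/-- Let `K` be a global function field of characteristic `p`, `R` a coordinate ring of `K`,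
`v` a height-one prime of `R` and `K_v` the `v`-adic completion of `K`. If `b ∈ K` becomes a
`p`-th power in `K_v`, then `b` is already a `p`-th power in `K`. -/
theorem pow_p_of_adicCompletion_pow_p
    (p : ℕ) (hp : p.Prime)
    (Fq K : Type) [Field Fq] [Fintype Fq] [Field K]
    [Algebra (RatFunc Fq) K] [FunctionField Fq K] [CharP K p]
    (R : Type) [CommRing R] [IsDedekindDomain R] [Algebra R K] [IsFractionRing R K]
    [Algebra Fq R] [Algebra Fq K] [IsScalarTower Fq R K] [Algebra.FiniteType Fq R]
    (v : HeightOneSpectrum R)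
    (b : K) (h : ∃ y : v.adicCompletion K, algebraMap K (v.adicCompletion K) b = y ^ p) :
    ∃ c : K, b = c ^ p :=
  pow_p_of_adicCompletion_pow_p_general p hp Fq K R v b h
end

section
/- Let K be a global function field of characteristic p, R a coordinate ring of K, 𝔸 = FiniteAdeleRing R K, and J = 𝔸ˣ its idele group with the units topology. Then the set of p-th powers {y^p : y ∈ J} is a closed subset of J. -/
/-!
In characteristic `p` the Frobenius `x ↦ x ^ p` is additive and `v (x ^ p) = v x ^ p`, so on a
complete valued field it is a uniform embedding and its image is complete, hence closed. An adele
is a `p`-th power as soon as each component is one: the `p`-th roots are automatically integral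
wherever the adele is. So the `p`-th powers form an intersection of closed sets in `𝔸`, and an idele
whose underlying adele is a `p`-th power is the `p`-th power of an idele.
-/

open IsDedekindDomain Filter Topology

namespace Valued

variable {R Γ₀ : Type*} [CommRing R] [LinearOrderedCommGroupWithZero Γ₀] [Valued R Γ₀]

theorem isInducing_frobenius (p : ℕ) [ExpChar R p] : IsInducing (frobenius R p) := by
  rw [IsTopologicalAddGroup.isInducing_iff_nhds_zero]
  have hcont : Continuous (frobenius R p) := continuous_pow p
  refine le_antisymm (by simpa using (hcont.tendsto 0).le_comap) ?_
  refine (hasBasis_nhds_zero R Γ₀).ge_iff.2 fun γ _ ↦ ?_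
  refine mem_comap.2 ⟨_, (hasBasis_nhds_zero R Γ₀).mem_of_mem (i := γ ^ p) trivial, fun x hx ↦ ?_⟩
  change v.restrict (x ^ p) < (γ ^ p).1 at hx
  rw [Valuation.map_pow, Units.val_pow_eq_pow_val] at hx
  exact lt_of_pow_lt_pow_left' p hx

theorem isClosed_range_pow [CompleteSpace R] [T0Space R] (p : ℕ) [ExpChar R p] :
    IsClosed (Set.range fun x : R ↦ x ^ p) :=
  (AddMonoidHom.isUniformInducing_of_isInducing
    (isInducing_frobenius p)).isComplete_range.isClosed

end Valued

theorem Units.val_preimage_range_pow {M : Type*} [Monoid M] {n : ℕ} (hn : n ≠ 0) :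
    Units.val ⁻¹' Set.range (fun a : M ↦ a ^ n) = Set.range fun u : Mˣ ↦ u ^ n := by
  ext x
  constructor
  · rintro ⟨a, ha : a ^ n = x⟩
    have ha' : IsUnit a := (isUnit_pow_iff hn).1 (ha ▸ x.isUnit)
    exact ⟨ha'.unit, Units.ext (by simpa using ha)⟩
  · rintro ⟨u, rfl⟩
    exact ⟨u, rfl⟩

namespace IsDedekindDomain.FiniteAdeleRing

variable {R K : Type*} [CommRing R] [IsDedekindDomain R] [Field K] [Algebra R K]
  [IsFractionRing R K]

theorem range_pow_eq_iInter {n : ℕ} (hn : n ≠ 0) :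
    Set.range (fun a : FiniteAdeleRing R K ↦ a ^ n) =
      ⋂ v, (fun a : FiniteAdeleRing R K ↦ a v) ⁻¹'
        Set.range fun x : v.adicCompletion K ↦ x ^ n := by
  ext a
  simp only [Set.mem_range, Set.mem_iInter, Set.mem_preimage]
  constructor
  · rintro ⟨b, rfl⟩ v
    exact ⟨b v, rfl⟩
  · intro h
    choose b hb using h
    have hint : ∀ᶠ v in cofinite, b v ∈ v.adicCompletionIntegers K := by
      filter_upwards [a.2] with v hv
      rw [HeightOneSpectrum.mem_adicCompletionIntegers, ← pow_le_one_iff hn, ← map_pow, hb v]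
      exact hv
    exact ⟨⟨b, hint⟩, FiniteAdeleRing.ext K hb⟩

theorem isClosed_range_pow (p : ℕ) [ExpChar K p] :
    IsClosed (Set.range fun a : FiniteAdeleRing R K ↦ a ^ p) := by
  rw [range_pow_eq_iInter (expChar_ne_zero K p)]
  refine isClosed_iInter fun v ↦ ?_
  have : ExpChar (v.adicCompletion K) p :=
    expChar_of_injective_algebraMap (algebraMap K _).injective p
  exact (Valued.isClosed_range_pow p).preimage (RestrictedProduct.continuous_eval v)

end IsDedekindDomain.FiniteAdeleRing

theorem isClosed_pow_p_ideles_general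
    (p : ℕ) (hp : p.Prime)
    (K : Type) [Field K]
    [CharP K p]
    (R : Type) [CommRing R] [IsDedekindDomain R] [Algebra R K] [IsFractionRing R K] :
    IsClosed {x : (FiniteAdeleRing R K)ˣ | ∃ y : (FiniteAdeleRing R K)ˣ, y ^ p = x} := by
  have : Fact p.Prime := ⟨hp⟩
  change IsClosed (Set.range fun y : (FiniteAdeleRing R K)ˣ ↦ y ^ p)
  rw [← Units.val_preimage_range_pow hp.ne_zero]
  exact (FiniteAdeleRing.isClosed_range_pow p).preimage Units.continuous_val

/-- Let `K` be a global function field of characteristic `p`, `R` a coordinate ring of `K`, and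
`J = 𝔸ˣ` the idele group of `K` (units of the finite adele ring, with the units topology).
Then the set of `p`-th powers in `J` is closed. -/
theorem isClosed_pow_p_ideles
    (p : ℕ) (hp : p.Prime)
    (Fq K : Type) [Field Fq] [Fintype Fq] [Field K]
    [Algebra (RatFunc Fq) K] [FunctionField Fq K] [CharP K p]
    (R : Type) [CommRing R] [IsDedekindDomain R] [Algebra R K] [IsFractionRing R K]
    [Algebra Fq R] [Algebra Fq K] [IsScalarTower Fq R K] [Algebra.FiniteType Fq R] :
    IsClosed {x : (FiniteAdeleRing R K)ˣ | ∃ y : (FiniteAdeleRing R K)ˣ, y ^ p = x} :=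
  isClosed_pow_p_ideles_general p hp K R
end
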